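/- arXiv:2412.08415 — 5 statements merged into one kernel-verified Lean document; each statement's English description precedes it below -/
import Mathlib

section
/- Fix q₀,q₁ ∈ ℝ², n ∈ ℕ and m > 0, and set r_n := max(|q₀|,|q₁|) + n. Let h ∈ 𝓗 be such that dh is supported in {(q,p) : |q| ≤ r_n} and h < m everywhere. Then every chord (v,η) of H₀ − h at energy 0 from q₀ to q₁ satisfies, writing v(t) = (q(t), p(t)): for all t ∈ [0,1], |q(t)| ≤ r_n and ⟨q(t),p(t)⟩² + (p₁(t)q₂(t) − p₂(t)q₁(t) + |q(t)|²)² ≤ |q(t)|²·(r_n² + 2m). (In polar coordinates this says r ≤ r_n, |p_r| ≤ √(r_n²+2m) and |p_θ/r + r| ≤ √(r_n²+2m).) -/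
open Set

abbrev R2 : Type := ℝ × ℝ
abbrev Phase : Type := R2 × R2

noncomputable section

def sq2 (a : R2) : ℝ := a.1 ^ 2 + a.2 ^ 2

/-- Euclidean norm on `ℝ²`. -/
def enorm2 (a : R2) : ℝ := Real.sqrt (sq2 a)

/-- Euclidean inner product on `ℝ²`. -/
def inner2 (a b : R2) : ℝ := a.1 * b.1 + a.2 * b.2

/-- The Copernican Hamiltonian `H₀(q,p) = (p₁² + p₂²)/2 + p₁q₂ − p₂q₁`. -/
def H0 (x : Phase) : ℝ :=
  (x.2.1 ^ 2 + x.2.2 ^ 2) / 2 + x.2.1 * x.1.2 - x.2.2 * x.1.1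

/-- The Hamiltonian vector field `X_H = (∂H/∂p₁, ∂H/∂p₂, −∂H/∂q₁, −∂H/∂q₂)`. -/
def XH (H : Phase → ℝ) (x : Phase) : Phase :=
  ((fderiv ℝ H x ((0, 0), (1, 0)), fderiv ℝ H x ((0, 0), (0, 1))),
   (-fderiv ℝ H x ((1, 0), (0, 0)), -fderiv ℝ H x ((0, 1), (0, 0))))

/-- `v` is a chord of `H` at energy `e` from `q0` to `q1` with parameter `η`. -/
def IsChord (H : Phase → ℝ) (e : ℝ) (q0 q1 : R2) (η : ℝ) (v : ℝ → Phase) : Prop :=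
  (v 0).1 = q0 ∧ (v 1).1 = q1 ∧
  (∀ t ∈ Icc (0:ℝ) 1, HasDerivWithinAt v (η • XH H (v t)) (Icc (0:ℝ) 1) t) ∧
  ∀ t ∈ Icc (0:ℝ) 1, H (v t) = e

end

lemma fderiv_H0_apply (x w : Phase) :
    fderiv ℝ H0 x w =
      x.2.1 * w.2.1 + x.2.2 * w.2.2 + (w.2.1 * x.1.2 + x.2.1 * w.1.2)
        - (w.2.2 * x.1.1 + x.2.2 * w.1.1) := by
  have hq1 : HasFDerivAt (fun y : Phase => y.1.1)
      ((ContinuousLinearMap.fst ℝ ℝ ℝ).comp (ContinuousLinearMap.fst ℝ R2 R2)) x :=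
    hasFDerivAt_fst.fst
  have hq2 : HasFDerivAt (fun y : Phase => y.1.2)
      ((ContinuousLinearMap.snd ℝ ℝ ℝ).comp (ContinuousLinearMap.fst ℝ R2 R2)) x :=
    hasFDerivAt_fst.snd
  have hp1 : HasFDerivAt (fun y : Phase => y.2.1)
      ((ContinuousLinearMap.fst ℝ ℝ ℝ).comp (ContinuousLinearMap.snd ℝ R2 R2)) x :=
    hasFDerivAt_snd.fst
  have hp2 : HasFDerivAt (fun y : Phase => y.2.2)
      ((ContinuousLinearMap.snd ℝ ℝ ℝ).comp (ContinuousLinearMap.snd ℝ R2 R2)) x :=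
    hasFDerivAt_snd.snd
  have hH := ((((hp1.mul hp1).add (hp2.mul hp2)).const_mul ((2:ℝ)⁻¹)).add (hp1.mul hq2)).sub (hp2.mul hq1)
  have he : (fun y : Phase => (2:ℝ)⁻¹ * (y.2.1 * y.2.1 + y.2.2 * y.2.2) + y.2.1 * y.1.2 - y.2.2 * y.1.1) = H0 := by
    funext y; simp only [H0]; ring
  replace hH : HasFDerivAt (fun y : Phase => (2:ℝ)⁻¹ * (y.2.1 * y.2.1 + y.2.2 * y.2.2) + y.2.1 * y.1.2 - y.2.2 * y.1.1) _ x := hH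
  rw [he] at hH
  rw [hH.fderiv]
  simp [ContinuousLinearMap.comp_apply]
  ring

lemma xh_eq (h : Phase → ℝ) (hdiff : Differentiable ℝ h) (x : Phase)
    (hdh : fderiv ℝ h x = 0) :
    XH (fun y => H0 y - h y) x = ((x.2.1 + x.1.2, x.2.2 - x.1.1), (x.2.2, -x.2.1)) := by
  have hH0 : DifferentiableAt ℝ H0 x := by
    have he : (fun y : Phase => (2:ℝ)⁻¹ * (y.2.1 * y.2.1 + y.2.2 * y.2.2) + y.2.1 * y.1.2 - y.2.2 * y.1.1) = H0 := by
      funext y; simp only [H0]; ring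
    rw [← he]
    fun_prop
  have hfd : fderiv ℝ (fun y => H0 y - h y) x = fderiv ℝ H0 x - fderiv ℝ h x :=
    fderiv_sub hH0 (hdiff x)
  simp only [XH, hfd, hdh, ContinuousLinearMap.sub_apply, ContinuousLinearMap.zero_apply,
    fderiv_H0_apply, sub_zero]
  norm_num


/-- If `h ∈ 𝓗` with `dh` supported in `{|q| ≤ rₙ}` and `h < m`, then every chord `(v,η)` of
`H₀ − h` at energy `0` from `q₀` to `q₁` satisfies `|q(t)| ≤ rₙ` and
`⟨q,p⟩² + (p₁q₂ − p₂q₁ + |q|²)² ≤ |q|²(rₙ² + 2m)` on `[0,1]`. -/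
theorem stmt1 (q0 q1 : R2) (n : ℕ) (m : ℝ) (hm : 0 < m)
    (rn : ℝ) (hrn : rn = max (enorm2 q0) (enorm2 q1) + n)
    (h : Phase → ℝ) (hsm : ContDiff ℝ (⊤ : ℕ∞) h)
    (hsupp : HasCompactSupport fun x => fderiv ℝ h x)
    (hpos : ∀ x, 0 < h x)
    (hLiou : ∀ x : Phase, 0 < h x - fderiv ℝ h x ((0, 0), x.2))
    (hsuppq : ∀ x : Phase, rn < enorm2 x.1 → fderiv ℝ h x = 0)
    (hhm : ∀ x, h x < m)
    (η : ℝ) (v : ℝ → Phase)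
    (hchord : IsChord (fun x => H0 x - h x) 0 q0 q1 η v) :
    ∀ t ∈ Icc (0:ℝ) 1,
      enorm2 (v t).1 ≤ rn ∧
      inner2 (v t).1 (v t).2 ^ 2 +
          ((v t).2.1 * (v t).1.2 - (v t).2.2 * (v t).1.1 + sq2 (v t).1) ^ 2 ≤
        sq2 (v t).1 * (rn ^ 2 + 2 * m) := by
  obtain ⟨hv0, hv1, hder, hE⟩ := hchord
  have hdiffh : Differentiable ℝ h := hsm.differentiable (by simp)
  have hrn0 : 0 ≤ rn := by
    rw [hrn]
    have : (0:ℝ) ≤ enorm2 q0 := Real.sqrt_nonneg _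
    have hn : (0:ℝ) ≤ (n:ℝ) := Nat.cast_nonneg n
    have := le_max_left (enorm2 q0) (enorm2 q1)
    linarith
  set f : ℝ → ℝ := fun t => sq2 (v t).1 with hfdef
  -- continuity
  have hcontv : ContinuousOn v (Icc 0 1) := fun t ht => (hder t ht).continuousWithinAt
  have hcontf : ContinuousOn f (Icc 0 1) := by
    apply ContinuousOn.add
    · exact ((continuous_fst.comp continuous_fst).comp_continuousOn hcontv).pow 2
    · exact ((continuous_snd.comp continuous_fst).comp_continuousOn hcontv).pow 2
  have hcontG : ContinuousOn (fun t => η * inner2 (v t).1 (v t).2) (Icc 0 1) := by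
    apply ContinuousOn.mul continuousOn_const
    apply ContinuousOn.add
    · exact ((continuous_fst.comp continuous_fst).comp_continuousOn hcontv).mul
        ((continuous_fst.comp continuous_snd).comp_continuousOn hcontv)
    · exact ((continuous_snd.comp continuous_fst).comp_continuousOn hcontv).mul
        ((continuous_snd.comp continuous_snd).comp_continuousOn hcontv)
  -- endpoints
  have hend : ∀ a : R2, enorm2 a ≤ rn → sq2 a ≤ rn ^ 2 := by
    intro a ha
    have h0 : 0 ≤ sq2 a := by unfold sq2; positivity
    have h1 : enorm2 a ^ 2 = sq2 a := Real.sq_sqrt h0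
    calc sq2 a = enorm2 a ^ 2 := h1.symm
      _ ≤ rn ^ 2 := pow_le_pow_left₀ (Real.sqrt_nonneg _) ha 2
  have hq0rn : enorm2 q0 ≤ rn := by
    rw [hrn]; have := le_max_left (enorm2 q0) (enorm2 q1)
    have hn : (0:ℝ) ≤ (n:ℝ) := Nat.cast_nonneg n; linarith
  have hq1rn : enorm2 q1 ≤ rn := by
    rw [hrn]; have := le_max_right (enorm2 q0) (enorm2 q1)
    have hn : (0:ℝ) ≤ (n:ℝ) := Nat.cast_nonneg n; linarith
  have hf0 : f 0 ≤ rn ^ 2 := by rw [hfdef]; simp only [hv0]; exact hend _ hq0rn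
  have hf1 : f 1 ≤ rn ^ 2 := by rw [hfdef]; simp only [hv1]; exact hend _ hq1rn
  -- derivative formulas on the high region
  have hVder : ∀ t ∈ Ioo (0:ℝ) 1, rn ^ 2 < f t →
      HasDerivAt v (η • (((v t).2.1 + (v t).1.2, (v t).2.2 - (v t).1.1),
        ((v t).2.2, -(v t).2.1))) t := by
    intro t ht hft
    have hmem : Icc (0:ℝ) 1 ∈ nhds t := Icc_mem_nhds ht.1 ht.2
    have hd := (hder t (Ioo_subset_Icc_self ht)).hasDerivAt hmem
    have hdh : fderiv ℝ h (v t) = 0 := by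
      apply hsuppq
      have h0 : 0 ≤ sq2 (v t).1 := by unfold sq2; positivity
      exact (Real.lt_sqrt hrn0).2 hft
    rwa [xh_eq h hdiffh _ hdh] at hd
  have hcomp : ∀ t ∈ Ioo (0:ℝ) 1, rn ^ 2 < f t →
      (HasDerivAt (fun s => (v s).1.1) (η * ((v t).2.1 + (v t).1.2)) t ∧
       HasDerivAt (fun s => (v s).1.2) (η * ((v t).2.2 - (v t).1.1)) t) ∧
      (HasDerivAt (fun s => (v s).2.1) (η * (v t).2.2) t ∧
       HasDerivAt (fun s => (v s).2.2) (η * (-(v t).2.1)) t) := by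
    intro t ht hft
    have hd := hVder t ht hft
    refine ⟨⟨?_, ?_⟩, ?_, ?_⟩
    · have := ((ContinuousLinearMap.fst ℝ ℝ ℝ).comp
        (ContinuousLinearMap.fst ℝ R2 R2)).hasFDerivAt.comp_hasDerivAt t hd
      simpa [Function.comp_def] using this
    · have := ((ContinuousLinearMap.snd ℝ ℝ ℝ).comp
        (ContinuousLinearMap.fst ℝ R2 R2)).hasFDerivAt.comp_hasDerivAt t hd
      simpa [Function.comp_def] using this
    · have := ((ContinuousLinearMap.fst ℝ ℝ ℝ).comp
        (ContinuousLinearMap.snd ℝ R2 R2)).hasFDerivAt.comp_hasDerivAt t hd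
      simpa [Function.comp_def] using this
    · have := ((ContinuousLinearMap.snd ℝ ℝ ℝ).comp
        (ContinuousLinearMap.snd ℝ R2 R2)).hasFDerivAt.comp_hasDerivAt t hd
      simpa [Function.comp_def] using this
  have hGder : ∀ t ∈ Ioo (0:ℝ) 1, rn ^ 2 < f t →
      HasDerivAt (fun s => η * inner2 (v s).1 (v s).2)
        (η ^ 2 * ((v t).2.1 ^ 2 + (v t).2.2 ^ 2)) t := by
    intro t ht hft
    obtain ⟨⟨hq1, hq2⟩, hp1, hp2⟩ := hcomp t ht hft
    have h2 := ((hq1.mul hp1).add (hq2.mul hp2)).const_mul η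
    simp only [inner2]
    refine h2.congr_deriv ?_
    ring
  have hfder : ∀ t ∈ Ioo (0:ℝ) 1, rn ^ 2 < f t →
      HasDerivAt f (2 * (η * inner2 (v t).1 (v t).2)) t := by
    intro t ht hft
    obtain ⟨⟨hq1, hq2⟩, hp1, hp2⟩ := hcomp t ht hft
    have h2 := (hq1.mul hq1).add (hq2.mul hq2)
    simp only [hfdef, sq2, pow_two, inner2]
    refine h2.congr_deriv ?_
    ring
  -- main claim: f ≤ rn^2 on [0,1]
  have hmain : ∀ t ∈ Icc (0:ℝ) 1, f t ≤ rn ^ 2 := by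
    by_contra hcon
    push_neg at hcon
    obtain ⟨t₀, ht₀, hft₀⟩ := hcon
    obtain ⟨c, hc, hcmax⟩ := isCompact_Icc.exists_isMaxOn (nonempty_Icc.2 zero_le_one) hcontf
    have hfc : rn ^ 2 < f c := lt_of_lt_of_le hft₀ (hcmax ht₀)
    have hc0 : c ≠ 0 := fun hc0 => by rw [hc0] at hfc; linarith
    have hc1 : c ≠ 1 := fun hc1 => by rw [hc1] at hfc; linarith
    have hcIoo : c ∈ Ioo (0:ℝ) 1 := ⟨lt_of_le_of_ne hc.1 (Ne.symm hc0), lt_of_le_of_ne hc.2 hc1⟩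
    set A := {t : ℝ | t ∈ Icc 0 c ∧ f t ≤ rn ^ 2} with hAdef
    have hAsub : A ⊆ Icc 0 1 := fun t ht => ⟨ht.1.1, le_trans ht.1.2 hc.2⟩
    have hAclosed : IsClosed A := by
      have : A = Icc 0 c ∩ f ⁻¹' (Iic (rn ^ 2)) := by ext t; simp [hAdef, and_comm]
      rw [this]
      exact ContinuousOn.preimage_isClosed_of_isClosed
        (hcontf.mono (Icc_subset_Icc le_rfl hc.2)) isClosed_Icc isClosed_Iic
    have hAne : A.Nonempty := ⟨0, ⟨⟨le_rfl, hc.1⟩, hf0⟩⟩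
    have hAbdd : BddAbove A := ⟨c, fun t ht => ht.1.2⟩
    set a := sSup A with hadef
    have haA : a ∈ A := hAclosed.csSup_mem hAne hAbdd
    have hac : a < c := lt_of_le_of_ne haA.1.2 (fun he => by rw [he] at haA; linarith [haA.2])
    have ha0 : 0 ≤ a := haA.1.1
    have hgt : ∀ t ∈ Ioc a c, rn ^ 2 < f t := by
      intro t ht
      by_contra hle
      push_neg at hle
      have : t ∈ A := ⟨⟨le_trans ha0 ht.1.le, ht.2⟩, hle⟩
      exact absurd (le_csSup hAbdd this) (not_le.2 ht.1)
    have hIoosub : Ioo a c ⊆ Ioo (0:ℝ) 1 :=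
      fun t ht => ⟨lt_of_le_of_lt ha0 ht.1, lt_of_lt_of_le ht.2 hcIoo.2.le⟩
    have hIccsub : Icc a c ⊆ Icc (0:ℝ) 1 := Icc_subset_Icc ha0 hcIoo.2.le
    -- G c = 0
    have hGc : η * inner2 (v c).1 (v c).2 = 0 := by
      have hd := hfder c hcIoo hfc
      have hloc : IsLocalMax f c := hcmax.isLocalMax (Icc_mem_nhds hcIoo.1 hcIoo.2)
      have := hloc.deriv_eq_zero
      rw [hd.deriv] at this
      linarith
    -- G monotone on [a,c]
    have hintD : interior (Icc a c) = Ioo a c := interior_Icc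
    have hGmono : MonotoneOn (fun t => η * inner2 (v t).1 (v t).2) (Icc a c) := by
      apply monotoneOn_of_deriv_nonneg (convex_Icc a c) (hcontG.mono hIccsub)
      · rw [hintD]
        intro t ht
        exact (hGder t (hIoosub ht) (hgt t ⟨ht.1, ht.2.le⟩)).differentiableAt.differentiableWithinAt
      · rw [hintD]
        intro t ht
        rw [(hGder t (hIoosub ht) (hgt t ⟨ht.1, ht.2.le⟩)).deriv]
        positivity
    -- f antitone on [a,c]
    have hfanti : AntitoneOn f (Icc a c) := by
      apply antitoneOn_of_deriv_nonpos (convex_Icc a c) (hcontf.mono hIccsub)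
      · rw [hintD]
        intro t ht
        exact (hfder t (hIoosub ht) (hgt t ⟨ht.1, ht.2.le⟩)).differentiableAt.differentiableWithinAt
      · rw [hintD]
        intro t ht
        rw [(hfder t (hIoosub ht) (hgt t ⟨ht.1, ht.2.le⟩)).deriv]
        have hGle : η * inner2 (v t).1 (v t).2 ≤ 0 := by
          have h2 := hGmono ⟨ht.1.le, ht.2.le⟩ ⟨hac.le, le_rfl⟩ ht.2.le
          simp only at h2
          rw [hGc] at h2
          exact h2
        linarith
    have : f c ≤ f a := hfanti ⟨le_rfl, hac.le⟩ ⟨hac.le, le_rfl⟩ hac.le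
    linarith [haA.2]
  -- conclusion
  intro t ht
  have hK := hmain t ht
  have hsq0 : 0 ≤ sq2 (v t).1 := by unfold sq2; positivity
  constructor
  · have := Real.sqrt_le_sqrt hK
    rwa [Real.sqrt_sq hrn0] at this
  · have hEt := hE t ht
    have hEn : H0 (v t) = h (v t) := by linarith [sub_eq_zero.1 hEt]
    have hhle : h (v t) ≤ m := (hhm (v t)).le
    simp only [H0] at hEn
    simp only [inner2, sq2] at *
    have hlag : ((v t).1.1 * (v t).2.1 + (v t).1.2 * (v t).2.2) ^ 2 +
        ((v t).2.1 * (v t).1.2 - (v t).2.2 * (v t).1.1) ^ 2 =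
        ((v t).1.1 ^ 2 + (v t).1.2 ^ 2) * ((v t).2.1 ^ 2 + (v t).2.2 ^ 2) := by ring
    have h3 : ((v t).1.1 ^ 2 + (v t).1.2 ^ 2) *
        (((v t).2.1 ^ 2 + (v t).2.2 ^ 2) / 2 + (v t).2.1 * (v t).1.2 - (v t).2.2 * (v t).1.1) =
        ((v t).1.1 ^ 2 + (v t).1.2 ^ 2) * h (v t) := by rw [hEn]
    have hK2 : (v t).1.1 ^ 2 + (v t).1.2 ^ 2 ≤ rn ^ 2 := hK
    nlinarith [hlag, h3, mul_nonneg hsq0 (sub_nonneg.2 hhle), mul_nonneg hsq0 (sub_nonneg.2 hK2)]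
end

section
/- Fix c > 0 and q₀,q₁ ∈ ℝ², and let f = f_{c,q₀,q₁}. For η ≠ 0 define v_η : [0,1] → ℝ²×ℝ² by v_η(t) := ((1−t)·R(tη)q₀ + t·R(η(t−1))q₁ , −(1/η)·R(tη)q₀ + (1/η)·R(η(t−1))q₁). Then the map η ↦ (v_η, η) is a bijection from {η ∈ ℝ : η ≠ 0 and f(η) = 0} onto the set of pairs (v,η) with η ≠ 0 such that v is a chord of H₀ at energy c from q₀ to q₁ with parameter η. -/
open Set

noncomputable section

/-- The rotation matrix `R(t) = [[cos t, sin t], [−sin t, cos t]]` acting on `ℝ²`. -/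
def rot (t : ℝ) (a : R2) : R2 :=
  (Real.cos t * a.1 + Real.sin t * a.2, -Real.sin t * a.1 + Real.cos t * a.2)

/-- `f_{c,q₀,q₁}(η) = −cη² + η⟨q₁, R(η+π/2)q₀⟩ + (|q₀|²+|q₁|²)/2 − ⟨q₁, R(η)q₀⟩`. -/
def ff (c : ℝ) (q0 q1 : R2) (η : ℝ) : ℝ :=
  -c * η ^ 2 + η * inner2 q1 (rot (η + Real.pi / 2) q0) +
    (sq2 q0 + sq2 q1) / 2 - inner2 q1 (rot η q0)

end

noncomputable section

/-- The explicit chord formula `v_η(t)`. -/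
def chordFormula (q0 q1 : R2) (η t : ℝ) : Phase :=
  ((1 - t) • rot (t * η) q0 + t • rot (η * (t - 1)) q1,
   (-(1 / η)) • rot (t * η) q0 + (1 / η) • rot (η * (t - 1)) q1)

end

lemma XH_H0 (x : Phase) : XH H0 x = ((x.2.1 + x.1.2, x.2.2 - x.1.1), (x.2.2, -x.2.1)) := by
  have h11 : HasFDerivAt (fun y : Phase => y.1.1)
      ((ContinuousLinearMap.fst ℝ ℝ ℝ).comp (ContinuousLinearMap.fst ℝ R2 R2)) x :=
    ((ContinuousLinearMap.fst ℝ ℝ ℝ).comp (ContinuousLinearMap.fst ℝ R2 R2)).hasFDerivAt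
  have h12 : HasFDerivAt (fun y : Phase => y.1.2)
      ((ContinuousLinearMap.snd ℝ ℝ ℝ).comp (ContinuousLinearMap.fst ℝ R2 R2)) x :=
    ((ContinuousLinearMap.snd ℝ ℝ ℝ).comp (ContinuousLinearMap.fst ℝ R2 R2)).hasFDerivAt
  have h21 : HasFDerivAt (fun y : Phase => y.2.1)
      ((ContinuousLinearMap.fst ℝ ℝ ℝ).comp (ContinuousLinearMap.snd ℝ R2 R2)) x :=
    ((ContinuousLinearMap.fst ℝ ℝ ℝ).comp (ContinuousLinearMap.snd ℝ R2 R2)).hasFDerivAt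
  have h22 : HasFDerivAt (fun y : Phase => y.2.2)
      ((ContinuousLinearMap.snd ℝ ℝ ℝ).comp (ContinuousLinearMap.snd ℝ R2 R2)) x :=
    ((ContinuousLinearMap.snd ℝ ℝ ℝ).comp (ContinuousLinearMap.snd ℝ R2 R2)).hasFDerivAt
  have hH := ((((h21.mul h21).add (h22.mul h22)).mul_const ((1:ℝ)/2)).add (h21.mul h12)).sub
    (h22.mul h11)
  have hfun : H0 = fun y : Phase => ((fun y : Phase => y.2.1) y * (fun y : Phase => y.2.1) y +
      (fun y : Phase => y.2.2) y * (fun y : Phase => y.2.2) y) * ((1:ℝ)/2) +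
      (fun y : Phase => y.2.1) y * (fun y : Phase => y.1.2) y -
      (fun y : Phase => y.2.2) y * (fun y : Phase => y.1.1) y := by
    funext y; simp only [H0]; ring
  have hH' : HasFDerivAt H0 _ x := hH.congr_of_eventuallyEq (Filter.Eventually.of_forall fun y => by
    simp only [H0, Pi.add_apply, Pi.mul_apply, Pi.sub_apply]; ring)
  unfold XH
  rw [hH'.fderiv]
  simp [Prod.ext_iff]
  constructor <;> ring

lemma H0_val (X Y : R2) (t η : ℝ) (hη : η ≠ 0) :
    H0 ((1-t) • X + t • Y, (-(1/η)) • X + (1/η) • Y) * η^2 =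
      (sq2 X + sq2 Y)/2 - (X.1*Y.1 + X.2*Y.2) - η*(X.1*Y.2 - X.2*Y.1) := by
  simp only [H0, sq2, Prod.fst_add, Prod.snd_add, Prod.smul_fst, Prod.smul_snd, smul_eq_mul]
  field_simp
  ring

lemma energy_chord (q0 q1 : R2) (η : ℝ) (hη : η ≠ 0) (t : ℝ) :
    H0 (chordFormula q0 q1 η t) * η ^ 2 =
      η * inner2 q1 (rot (η + Real.pi / 2) q0) + (sq2 q0 + sq2 q1) / 2 -
        inner2 q1 (rot η q0) := by
  rw [show chordFormula q0 q1 η t = ((1-t) • rot (t*η) q0 + t • rot (η*(t-1)) q1,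
    (-(1/η)) • rot (t*η) q0 + (1/η) • rot (η*(t-1)) q1) from rfl, H0_val _ _ _ _ hη]
  rw [show η * (t-1) = t*η - η by ring]
  simp only [rot, inner2, sq2, Real.cos_sub, Real.sin_sub, Real.cos_add, Real.sin_add,
    Real.cos_pi_div_two, Real.sin_pi_div_two]
  linear_combination
    ((q0.1^2+q0.2^2)/2 + (Real.sin η^2+Real.cos η^2)*(q1.1^2+q1.2^2)/2
      - (q1.1*(Real.cos η*q0.1+Real.sin η*q0.2) + q1.2*(-Real.sin η*q0.1+Real.cos η*q0.2))
      - η*(Real.sin η*q0.1*q1.1 + Real.cos η*q0.1*q1.2 - Real.cos η*q0.2*q1.1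
        + Real.sin η*q0.2*q1.2)) * Real.sin_sq_add_cos_sq (t*η)
    + ((q1.1^2+q1.2^2)/2) * Real.sin_sq_add_cos_sq η
lemma hasDerivAt_chordFormula (q0 q1 : R2) (η : ℝ) (hη : η ≠ 0) (t : ℝ) :
    HasDerivAt (chordFormula q0 q1 η) (η • XH H0 (chordFormula q0 q1 η t)) t := by
  have hθ1 : HasDerivAt (fun s : ℝ => s * η) η t := hasDerivAt_mul_const η
  have hθ2 : HasDerivAt (fun s : ℝ => η * (s - 1)) (η * 1) t :=
    ((hasDerivAt_id t).sub_const 1).const_mul η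
  have hc1 : HasDerivAt (fun s : ℝ => Real.cos (s*η)) (-Real.sin (t*η) * η) t :=
    ((Real.hasDerivAt_cos (t*η)).comp t hθ1 :)
  have hs1 : HasDerivAt (fun s : ℝ => Real.sin (s*η)) (Real.cos (t*η) * η) t :=
    ((Real.hasDerivAt_sin (t*η)).comp t hθ1 :)
  have hc2 : HasDerivAt (fun s : ℝ => Real.cos (η*(s-1))) (-Real.sin (η*(t-1)) * (η*1)) t :=
    ((Real.hasDerivAt_cos (η*(t-1))).comp t hθ2 :)
  have hs2 : HasDerivAt (fun s : ℝ => Real.sin (η*(s-1))) (Real.cos (η*(t-1)) * (η*1)) t :=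
    ((Real.hasDerivAt_sin (η*(t-1))).comp t hθ2 :)
  have h1mt : HasDerivAt (fun s : ℝ => 1 - s) (-1) t := by
    simpa using (hasDerivAt_id t).const_sub 1
  have hid : HasDerivAt (fun s : ℝ => s) 1 t := hasDerivAt_id t
  have hA1 := (hc1.mul_const q0.1).add (hs1.mul_const q0.2)
  have hA2 := (hs1.neg.mul_const q0.1).add (hc1.mul_const q0.2)
  have hB1 := (hc2.mul_const q1.1).add (hs2.mul_const q1.2)
  have hB2 := (hs2.neg.mul_const q1.1).add (hc2.mul_const q1.2)
  have he11 := (h1mt.mul hA1).add (hid.mul hB1)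
  have he12 := (h1mt.mul hA2).add (hid.mul hB2)
  have he21 := (hA1.const_mul (-(1/η))).add (hB1.const_mul (1/η))
  have he22 := (hA2.const_mul (-(1/η))).add (hB2.const_mul (1/η))
  have hv := (he11.prodMk he12).prodMk (he21.prodMk he22)
  have hfun : chordFormula q0 q1 η = fun s =>
      (((1-s) * (Real.cos (s*η) * q0.1 + Real.sin (s*η) * q0.2) +
          s * (Real.cos (η*(s-1)) * q1.1 + Real.sin (η*(s-1)) * q1.2),
        (1-s) * (-Real.sin (s*η) * q0.1 + Real.cos (s*η) * q0.2) +
          s * (-Real.sin (η*(s-1)) * q1.1 + Real.cos (η*(s-1)) * q1.2)),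
       ((-(1/η)) * (Real.cos (s*η) * q0.1 + Real.sin (s*η) * q0.2) +
          (1/η) * (Real.cos (η*(s-1)) * q1.1 + Real.sin (η*(s-1)) * q1.2),
        (-(1/η)) * (-Real.sin (s*η) * q0.1 + Real.cos (s*η) * q0.2) +
          (1/η) * (-Real.sin (η*(s-1)) * q1.1 + Real.cos (η*(s-1)) * q1.2))) := by
    funext s; rfl
  rw [hfun, XH_H0]
  convert hv using 1
  · rfl
  simp only [Prod.smul_mk, smul_eq_mul, Prod.mk.injEq, Pi.add_apply, Pi.mul_apply, Pi.neg_apply]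
  refine ⟨⟨?_, ?_⟩, ?_, ?_⟩ <;> (field_simp <;> ring)
lemma const_of_deriv_zero (F : ℝ → ℝ)
    (hF : ∀ t ∈ Icc (0:ℝ) 1, HasDerivWithinAt F 0 (Icc (0:ℝ) 1) t) :
    ∀ t ∈ Icc (0:ℝ) 1, F t = F 0 := by
  have hFc : ContinuousOn F (Icc 0 1) := fun x hx => (hF x hx).continuousWithinAt
  exact constant_of_has_deriv_right_zero hFc fun x hx =>
    (hF x (Ico_subset_Icc_self hx)).mono_of_mem_nhdsWithin (Icc_mem_nhdsGE_of_mem hx)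

lemma chord_unique (q0 q1 : R2) (η : ℝ) (hη : η ≠ 0) (v : ℝ → Phase)
    (hd : ∀ t ∈ Icc (0:ℝ) 1, HasDerivWithinAt v (η • XH H0 (v t)) (Icc (0:ℝ) 1) t)
    (h0 : (v 0).1 = q0) (h1 : (v 1).1 = q1) :
    ∀ t ∈ Icc (0:ℝ) 1, v t = chordFormula q0 q1 η t := by
  -- component derivatives
  have hq1 : ∀ t ∈ Icc (0:ℝ) 1, HasDerivWithinAt (fun s => (v s).1.1)
      (η * ((v t).2.1 + (v t).1.2)) (Icc (0:ℝ) 1) t := by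
    intro t ht
    have := ((ContinuousLinearMap.fst ℝ ℝ ℝ).comp
      (ContinuousLinearMap.fst ℝ R2 R2)).hasFDerivAt.comp_hasDerivWithinAt t (hd t ht)
    simpa [XH_H0, Function.comp_def] using this
  have hq2 : ∀ t ∈ Icc (0:ℝ) 1, HasDerivWithinAt (fun s => (v s).1.2)
      (η * ((v t).2.2 - (v t).1.1)) (Icc (0:ℝ) 1) t := by
    intro t ht
    have := ((ContinuousLinearMap.snd ℝ ℝ ℝ).comp
      (ContinuousLinearMap.fst ℝ R2 R2)).hasFDerivAt.comp_hasDerivWithinAt t (hd t ht)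
    simpa [XH_H0, Function.comp_def] using this
  have hp1 : ∀ t ∈ Icc (0:ℝ) 1, HasDerivWithinAt (fun s => (v s).2.1)
      (η * (v t).2.2) (Icc (0:ℝ) 1) t := by
    intro t ht
    have := ((ContinuousLinearMap.fst ℝ ℝ ℝ).comp
      (ContinuousLinearMap.snd ℝ R2 R2)).hasFDerivAt.comp_hasDerivWithinAt t (hd t ht)
    simpa [XH_H0, Function.comp_def] using this
  have hp2 : ∀ t ∈ Icc (0:ℝ) 1, HasDerivWithinAt (fun s => (v s).2.2)
      (η * -(v t).2.1) (Icc (0:ℝ) 1) t := by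
    intro t ht
    have := ((ContinuousLinearMap.snd ℝ ℝ ℝ).comp
      (ContinuousLinearMap.snd ℝ R2 R2)).hasFDerivAt.comp_hasDerivWithinAt t (hd t ht)
    simpa [XH_H0, Function.comp_def] using this
  -- cos/sin derivative helpers
  have hcc : ∀ t : ℝ, HasDerivAt (fun s : ℝ => Real.cos (s*η)) (-Real.sin (t*η) * η) t :=
    fun t => ((Real.hasDerivAt_cos (t*η)).comp t (hasDerivAt_mul_const η) :)
  have hss : ∀ t : ℝ, HasDerivAt (fun s : ℝ => Real.sin (s*η)) (Real.cos (t*η) * η) t :=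
    fun t => ((Real.hasDerivAt_sin (t*η)).comp t (hasDerivAt_mul_const η) :)
  -- conserved quantities
  have hW1 : ∀ t ∈ Icc (0:ℝ) 1,
      Real.cos (t*η) * (v t).2.1 - Real.sin (t*η) * (v t).2.2 = (v 0).2.1 := by
    have := const_of_deriv_zero (fun s => Real.cos (s*η) * (v s).2.1 - Real.sin (s*η) * (v s).2.2)
      (by
        intro t ht
        have h := (((hcc t).hasDerivWithinAt.mul (hp1 t ht)).sub
          ((hss t).hasDerivWithinAt.mul (hp2 t ht)))
        convert h using 1
        · rfl
        · rfl
        · rfl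
        ring)
    intro t ht
    simpa using this t ht
  have hW2 : ∀ t ∈ Icc (0:ℝ) 1,
      Real.sin (t*η) * (v t).2.1 + Real.cos (t*η) * (v t).2.2 = (v 0).2.2 := by
    have := const_of_deriv_zero (fun s => Real.sin (s*η) * (v s).2.1 + Real.cos (s*η) * (v s).2.2)
      (by
        intro t ht
        have h := (((hss t).hasDerivWithinAt.mul (hp1 t ht)).add
          ((hcc t).hasDerivWithinAt.mul (hp2 t ht)))
        convert h using 1
        · rfl
        · rfl
        · rfl
        ring)
    intro t ht
    simpa using this t ht
  have hZ1 : ∀ t ∈ Icc (0:ℝ) 1,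
      Real.cos (t*η) * (v t).1.1 - Real.sin (t*η) * (v t).1.2
        - t * η * (Real.cos (t*η) * (v t).2.1 - Real.sin (t*η) * (v t).2.2) = q0.1 := by
    have := const_of_deriv_zero (fun s => Real.cos (s*η) * (v s).1.1 - Real.sin (s*η) * (v s).1.2
        - s * η * (Real.cos (s*η) * (v s).2.1 - Real.sin (s*η) * (v s).2.2))
      (by
        intro t ht
        have h := ((((hcc t).hasDerivWithinAt.mul (hq1 t ht)).sub
          ((hss t).hasDerivWithinAt.mul (hq2 t ht))).sub
          ((hasDerivAt_mul_const η).hasDerivWithinAt.mul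
            (((hcc t).hasDerivWithinAt.mul (hp1 t ht)).sub
              ((hss t).hasDerivWithinAt.mul (hp2 t ht)))))
        convert h using 1
        · rfl
        · rfl
        · rfl
        simp only [Pi.mul_apply, Pi.sub_apply, Pi.add_apply]
        ring)
    intro t ht
    have h0' : (v 0).1.1 = q0.1 := by rw [h0]
    simpa [h0'] using this t ht
  have hZ2 : ∀ t ∈ Icc (0:ℝ) 1,
      Real.sin (t*η) * (v t).1.1 + Real.cos (t*η) * (v t).1.2
        - t * η * (Real.sin (t*η) * (v t).2.1 + Real.cos (t*η) * (v t).2.2) = q0.2 := by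
    have := const_of_deriv_zero (fun s => Real.sin (s*η) * (v s).1.1 + Real.cos (s*η) * (v s).1.2
        - s * η * (Real.sin (s*η) * (v s).2.1 + Real.cos (s*η) * (v s).2.2))
      (by
        intro t ht
        have h := ((((hss t).hasDerivWithinAt.mul (hq1 t ht)).add
          ((hcc t).hasDerivWithinAt.mul (hq2 t ht))).sub
          ((hasDerivAt_mul_const η).hasDerivWithinAt.mul
            (((hss t).hasDerivWithinAt.mul (hp1 t ht)).add
              ((hcc t).hasDerivWithinAt.mul (hp2 t ht)))))
        convert h using 1
        · rfl
        · rfl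
        · rfl
        simp only [Pi.mul_apply, Pi.sub_apply, Pi.add_apply]
        ring)
    intro t ht
    have h0' : (v 0).1.2 = q0.2 := by rw [h0]
    simpa [h0'] using this t ht
  -- endpoint values determine P = (v 0).2
  have h1mem : (1:ℝ) ∈ Icc (0:ℝ) 1 := by norm_num
  have h11' : (v 1).1.1 = q1.1 := by rw [h1]
  have h12' : (v 1).1.2 = q1.2 := by rw [h1]
  have hE11 := hW1 1 h1mem
  have hE21 := hW2 1 h1mem
  have hE31 := hZ1 1 h1mem
  have hE41 := hZ2 1 h1mem
  rw [one_mul] at hE11 hE21 hE31 hE41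
  rw [h11', h12'] at hE31 hE41
  have hP1v : η * (v 0).2.1 = Real.cos η * q1.1 - Real.sin η * q1.2 - q0.1 := by
    linear_combination -hE31 - η * hE11
  have hP2v : η * (v 0).2.2 = Real.sin η * q1.1 + Real.cos η * q1.2 - q0.2 := by
    linear_combination -hE41 - η * hE21
  -- conclude
  intro t ht
  have hpy : Real.sin (t*η) ^ 2 + Real.cos (t*η) ^ 2 = 1 := Real.sin_sq_add_cos_sq _
  have hE1 := hW1 t ht
  have hE2 := hW2 t ht
  have hE3 := hZ1 t ht
  have hE4 := hZ2 t ht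
  have hp1t : (v t).2.1 = Real.cos (t*η) * (v 0).2.1 + Real.sin (t*η) * (v 0).2.2 := by
    linear_combination Real.cos (t*η) * hE1 + Real.sin (t*η) * hE2 - (v t).2.1 * hpy
  have hp2t : (v t).2.2 = -Real.sin (t*η) * (v 0).2.1 + Real.cos (t*η) * (v 0).2.2 := by
    linear_combination (-Real.sin (t*η)) * hE1 + Real.cos (t*η) * hE2 - (v t).2.2 * hpy
  have hq1t : (v t).1.1 = Real.cos (t*η) * (q0.1 + t*η*(v 0).2.1)
      + Real.sin (t*η) * (q0.2 + t*η*(v 0).2.2) := by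
    linear_combination Real.cos (t*η) * hE3 + Real.sin (t*η) * hE4
      + t*η*Real.cos (t*η) * hE1 + t*η*Real.sin (t*η) * hE2 - (v t).1.1 * hpy
  have hq2t : (v t).1.2 = -Real.sin (t*η) * (q0.1 + t*η*(v 0).2.1)
      + Real.cos (t*η) * (q0.2 + t*η*(v 0).2.2) := by
    linear_combination (-Real.sin (t*η)) * hE3 + Real.cos (t*η) * hE4
      - t*η*Real.sin (t*η) * hE1 + t*η*Real.cos (t*η) * hE2 - (v t).1.2 * hpy
  have hcf : chordFormula q0 q1 η t =
      (((1-t) * (Real.cos (t*η) * q0.1 + Real.sin (t*η) * q0.2) +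
          t * (Real.cos (η*(t-1)) * q1.1 + Real.sin (η*(t-1)) * q1.2),
        (1-t) * (-Real.sin (t*η) * q0.1 + Real.cos (t*η) * q0.2) +
          t * (-Real.sin (η*(t-1)) * q1.1 + Real.cos (η*(t-1)) * q1.2)),
       ((-(1/η)) * (Real.cos (t*η) * q0.1 + Real.sin (t*η) * q0.2) +
          (1/η) * (Real.cos (η*(t-1)) * q1.1 + Real.sin (η*(t-1)) * q1.2),
        (-(1/η)) * (-Real.sin (t*η) * q0.1 + Real.cos (t*η) * q0.2) +
          (1/η) * (-Real.sin (η*(t-1)) * q1.1 + Real.cos (η*(t-1)) * q1.2))) := rfl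
  rw [hcf, show η * (t-1) = t*η - η by ring, Real.cos_sub, Real.sin_sub]
  refine Prod.ext (Prod.ext ?_ ?_) (Prod.ext ?_ ?_)
  · show (v t).1.1 = _
    rw [hq1t]
    linear_combination t * Real.cos (t*η) * hP1v + t * Real.sin (t*η) * hP2v
  · show (v t).1.2 = _
    rw [hq2t]
    linear_combination (-t) * Real.sin (t*η) * hP1v + t * Real.cos (t*η) * hP2v
  · show (v t).2.1 = _
    rw [hp1t]
    field_simp
    linear_combination Real.cos (t*η) * hP1v + Real.sin (t*η) * hP2v
  · show (v t).2.2 = _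
    rw [hp2t]
    field_simp
    linear_combination (-Real.sin (t*η)) * hP1v + Real.cos (t*η) * hP2v

/-- The map `η ↦ (v_η, η)` is a bijection from the nonzero zeroes of `f = f_{c,q₀,q₁}` onto
the pairs `(v,η)`, `η ≠ 0`, with `v` a chord of `H₀` at energy `c` from `q₀` to `q₁` with
parameter `η` (chords being identified when they agree on `[0,1]`). -/
theorem stmt9 (c : ℝ) (hc : 0 < c) (q0 q1 : R2) :
    (∀ η : ℝ, η ≠ 0 → ff c q0 q1 η = 0 →
      IsChord H0 c q0 q1 η (chordFormula q0 q1 η)) ∧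
    ∀ η : ℝ, η ≠ 0 → ∀ v : ℝ → Phase, IsChord H0 c q0 q1 η v →
      ff c q0 q1 η = 0 ∧ ∀ t ∈ Icc (0:ℝ) 1, v t = chordFormula q0 q1 η t := by
  constructor
  · intro η hη hff
    refine ⟨?_, ?_, ?_, ?_⟩
    · show ((1-(0:ℝ)) • rot (0 * η) q0 + (0:ℝ) • rot (η * (0 - 1)) q1) = q0
      norm_num [rot]
    · show ((1-(1:ℝ)) • rot (1 * η) q0 + (1:ℝ) • rot (η * (1 - 1)) q1) = q1
      norm_num [rot]
    · intro t ht
      exact (hasDerivAt_chordFormula q0 q1 η hη t).hasDerivWithinAt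
    · intro t ht
      have h := energy_chord q0 q1 η hη t
      unfold ff at hff
      have h2 : H0 (chordFormula q0 q1 η t) * η ^ 2 = c * η ^ 2 := by linarith
      exact mul_right_cancel₀ (pow_ne_zero 2 hη) h2
  · intro η hη v hv
    obtain ⟨h0, h1, hd, hE⟩ := hv
    have huniq := chord_unique q0 q1 η hη v hd h0 h1
    refine ⟨?_, huniq⟩
    have h0mem : (0:ℝ) ∈ Icc (0:ℝ) 1 := by norm_num
    have h00 := hE 0 h0mem
    rw [huniq 0 h0mem] at h00
    have h := energy_chord q0 q1 η hη 0
    rw [h00] at h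
    unfold ff
    linarith
end

section
/- Fix c > 0 and q₀,q₁ ∈ ℝ² with |q₀|·|q₁| ≤ 2c, and let f = f_{c,q₀,q₁}. If q₀ ≠ q₁, then f has exactly one zero in (0,∞) and exactly one zero in (−∞,0). If q₀ = q₁, then 0 is the only zero of f. -/
open Set

noncomputable def G (c α β C η : ℝ) : ℝ :=
  -c*η^2 + η*(β*Real.cos η - α*Real.sin η) + C - (α*Real.cos η + β*Real.sin η)

lemma ff_eq (c : ℝ) (q0 q1 : R2) (η : ℝ) :
    ff c q0 q1 η = G c (q1.1*q0.1 + q1.2*q0.2) (q1.1*q0.2 - q1.2*q0.1)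
      ((sq2 q0 + sq2 q1)/2) η := by
  unfold ff G inner2 rot sq2
  rw [Real.cos_add, Real.sin_add, Real.cos_pi_div_two, Real.sin_pi_div_two]
  ring

lemma ff_neg (c : ℝ) (q0 q1 : R2) (η : ℝ) :
    ff c q0 q1 (-η) = ff c q1 q0 η := by
  rw [ff_eq, ff_eq]
  unfold G
  rw [Real.cos_neg, Real.sin_neg]
  ring
lemma hasDerivG (c α β C η : ℝ) :
    HasDerivAt (G c α β C) (-η * ((α*Real.cos η + β*Real.sin η) + 2*c)) η := by
  have h := ((((hasDerivAt_pow 2 η).const_mul (-c)).add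
      ((hasDerivAt_id η).mul (((Real.hasDerivAt_cos η).const_mul β).sub
        ((Real.hasDerivAt_sin η).const_mul α)))).add_const C).sub
      (((Real.hasDerivAt_cos η).const_mul α).add ((Real.hasDerivAt_sin η).const_mul β))
  have hfun : G c α β C = (fun x => (-c * x ^ 2 + x * (β * Real.cos x - α * Real.sin x) + C) - (α * Real.cos x + β * Real.sin x)) := funext fun x => by unfold G; ring
  rw [hfun]
  exact h.congr_deriv (by simp; ring)

lemma hasDerivg (α β η : ℝ) :
    HasDerivAt (fun x => α*Real.cos x + β*Real.sin x) (β*Real.cos η - α*Real.sin η) η := by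
  have h := ((Real.hasDerivAt_cos η).const_mul α).add ((Real.hasDerivAt_sin η).const_mul β)
  exact h.congr_deriv (by ring)

lemma g_bnd (c α β η : ℝ) (hc : 0 < c) (hb : α^2 + β^2 ≤ (2*c)^2) :
    |α*Real.cos η + β*Real.sin η| ≤ 2*c := by
  have hs := Real.sin_sq_add_cos_sq η
  rw [abs_le]
  constructor <;> nlinarith [sq_nonneg (α*Real.sin η - β*Real.cos η),
    sq_nonneg (α*Real.cos η + β*Real.sin η + 2*c), sq_nonneg (α*Real.cos η + β*Real.sin η - 2*c)]

lemma strictAntiG (c α β C : ℝ) (hc : 0 < c) (hb : α^2 + β^2 ≤ (2*c)^2) :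
    StrictAntiOn (G c α β C) (Ici 0) := by
  set g : ℝ → ℝ := fun x => α*Real.cos x + β*Real.sin x with hg
  have hanti : AntitoneOn (G c α β C) (Ici 0) := by
    refine antitoneOn_of_deriv_nonpos (convex_Ici 0)
      (fun x _ => (hasDerivG c α β C x).differentiableAt.continuousAt.continuousWithinAt)
      (fun x _ => (hasDerivG c α β C x).differentiableAt.differentiableWithinAt) ?_
    intro x hx
    rw [interior_Ici] at hx
    rw [(hasDerivG c α β C x).deriv]
    have := g_bnd c α β x hc hb
    rw [abs_le] at this
    have hx0 : (0:ℝ) < x := hx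
    nlinarith [this.1]
  intro a ha b hbm hab
  by_contra hle
  push_neg at hle
  have heq : ∀ x ∈ Icc a b, G c α β C x = G c α β C a := by
    intro x hx
    have h1 : G c α β C x ≤ G c α β C a := hanti ha (le_trans ha hx.1) hx.1
    have h2 : G c α β C b ≤ G c α β C x :=
      hanti (le_trans ha hx.1) hbm hx.2
    linarith
  have hg0 : ∀ η ∈ Ioo a b, g η = -(2*c) := by
    intro η hη
    have hev : G c α β C =ᶠ[nhds η] fun _ => G c α β C a :=
      Filter.eventually_of_mem (isOpen_Ioo.mem_nhds hη)
        (fun x hx => heq x (Ioo_subset_Icc_self hx))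
    have hd : deriv (G c α β C) η = 0 := by rw [hev.deriv_eq]; simp
    rw [(hasDerivG c α β C η).deriv] at hd
    have hηpos : 0 < η := lt_of_le_of_lt ha hη.1
    rcases mul_eq_zero.1 hd with h | h
    · linarith
    · simpa [hg] using by linarith
  set η₀ : ℝ := (a+b)/2 with hη₀
  have hmem : η₀ ∈ Ioo a b := ⟨by simp [hη₀]; linarith, by simp [hη₀]; linarith⟩
  have hgev : g =ᶠ[nhds η₀] fun _ => -(2*c) :=
    Filter.eventually_of_mem (isOpen_Ioo.mem_nhds hmem) (fun x hx => hg0 x hx)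
  have hd1 : deriv g =ᶠ[nhds η₀] fun _ => (0:ℝ) := by
    have := hgev.deriv
    simpa using this
  have hd2 : deriv (deriv g) η₀ = 0 := by rw [hd1.deriv_eq]; simp
  have hdg : deriv g = fun x => β*Real.cos x - α*Real.sin x :=
    funext fun x => (hasDerivg α β x).deriv
  rw [hdg] at hd2
  have hdd : HasDerivAt (fun x => β*Real.cos x - α*Real.sin x)
      (-(α*Real.cos η₀ + β*Real.sin η₀)) η₀ := by
    have h := ((Real.hasDerivAt_cos η₀).const_mul β).sub ((Real.hasDerivAt_sin η₀).const_mul α)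
    exact h.congr_deriv (by ring)
  rw [hdd.deriv] at hd2
  have := hg0 η₀ hmem
  simp only [hg] at this
  nlinarith

lemma exuG (c α β C : ℝ) (hc : 0 < c) (hb : α^2 + β^2 ≤ (2*c)^2) (h0 : 0 < C - α) :
    ∃! η : ℝ, 0 < η ∧ G c α β C η = 0 := by
  have hdiff : Differentiable ℝ (G c α β C) := fun x => (hasDerivG c α β C x).differentiableAt
  have hcont : Continuous (G c α β C) := hdiff.continuous
  set N : ℝ := 3 + (|C| + 2*c)/c with hN
  have hN3 : 3 ≤ N := by
    have h : 0 ≤ (|C| + 2*c)/c := by positivity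
    rw [hN]; linarith
  have hNpos : (0:ℝ) < N := by linarith
  have hGN : G c α β C N < 0 := by
    have hbnd1 := g_bnd c α β N hc hb
    have hbnd2 : |β*Real.cos N - α*Real.sin N| ≤ 2*c := by
      have hs := Real.sin_sq_add_cos_sq N
      rw [abs_le]
      constructor <;> nlinarith [sq_nonneg (α*Real.cos N + β*Real.sin N),
        sq_nonneg (β*Real.cos N - α*Real.sin N + 2*c), sq_nonneg (β*Real.cos N - α*Real.sin N - 2*c)]
    rw [abs_le] at hbnd1 hbnd2
    have hcN : c * N = 3*c + |C| + 2*c := by rw [hN]; field_simp; ring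
    have hCle : C ≤ |C| := le_abs_self C
    unfold G
    nlinarith [mul_le_mul_of_nonneg_left hbnd2.2 hNpos.le, hbnd1.1, sq_nonneg (N - 3)]
  have hG0 : 0 < G c α β C 0 := by
    unfold G; simpa using h0
  have himg : (0:ℝ) ∈ G c α β C '' Ioo 0 N := by
    apply intermediate_value_Ioo' hNpos.le hcont.continuousOn
    exact ⟨hGN, hG0⟩
  obtain ⟨η, hη, hηz⟩ := himg
  have hSA := strictAntiG c α β C hc hb
  refine ⟨η, ⟨hη.1, hηz⟩, ?_⟩
  rintro y ⟨hy, hyz⟩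
  by_contra hne
  rcases lt_or_gt_of_ne hne with h | h
  · have := hSA (le_of_lt hy) (le_of_lt hη.1) h
    rw [hyz, hηz] at this; exact lt_irrefl 0 this
  · have := hSA (le_of_lt hη.1) (le_of_lt hy) h
    rw [hyz, hηz] at this; exact lt_irrefl 0 this

lemma bnd_of_le (c : ℝ) (hc : 0 < c) (q0 q1 : R2) (hle : enorm2 q0 * enorm2 q1 ≤ 2 * c) :
    (q1.1*q0.1 + q1.2*q0.2)^2 + (q1.1*q0.2 - q1.2*q0.1)^2 ≤ (2*c)^2 := by
  have h0 : (0:ℝ) ≤ sq2 q0 := by unfold sq2; positivity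
  have h1 : (0:ℝ) ≤ sq2 q1 := by unfold sq2; positivity
  have hid : (q1.1*q0.1 + q1.2*q0.2)^2 + (q1.1*q0.2 - q1.2*q0.1)^2 = sq2 q0 * sq2 q1 := by
    unfold sq2; ring
  have h2 : sq2 q0 * sq2 q1 = (enorm2 q0 * enorm2 q1)^2 := by
    unfold enorm2; rw [mul_pow, Real.sq_sqrt h0, Real.sq_sqrt h1]
  have h3 : (0:ℝ) ≤ enorm2 q0 * enorm2 q1 := by
    unfold enorm2; positivity
  rw [hid, h2]
  exact pow_le_pow_left₀ h3 hle 2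

/-- positive-side existence and uniqueness for `ff`. -/
lemma pos_side (c : ℝ) (hc : 0 < c) (q0 q1 : R2)
    (hle : enorm2 q0 * enorm2 q1 ≤ 2 * c) (hne : q0 ≠ q1) :
    ∃! η : ℝ, 0 < η ∧ ff c q0 q1 η = 0 := by
  have h0 : 0 < (sq2 q0 + sq2 q1)/2 - (q1.1*q0.1 + q1.2*q0.2) := by
    have hne' : q0.1 ≠ q1.1 ∨ q0.2 ≠ q1.2 := by
      by_contra h
      push_neg at h
      exact hne (Prod.ext h.1 h.2)
    unfold sq2
    rcases hne' with h | h
    · have h1 : 0 < (q0.1 - q1.1)^2 :=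
        lt_of_le_of_ne (sq_nonneg _) (Ne.symm (pow_ne_zero 2 (sub_ne_zero.mpr h)))
      nlinarith [sq_nonneg (q0.2 - q1.2)]
    · have h1 : 0 < (q0.2 - q1.2)^2 :=
        lt_of_le_of_ne (sq_nonneg _) (Ne.symm (pow_ne_zero 2 (sub_ne_zero.mpr h)))
      nlinarith [sq_nonneg (q0.1 - q1.1)]
  have := exuG c (q1.1*q0.1 + q1.2*q0.2) (q1.1*q0.2 - q1.2*q0.1) ((sq2 q0 + sq2 q1)/2)
    hc (bnd_of_le c hc q0 q1 hle) h0
  simpa only [← ff_eq] using this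

/-- For `c > 0` and `|q₀||q₁| ≤ 2c`: if `q₀ ≠ q₁` then `f_{c,q₀,q₁}` has exactly one zero on
`(0,∞)` and exactly one zero on `(−∞,0)`; if `q₀ = q₁` then `0` is its only zero. -/
theorem stmt10 (c : ℝ) (hc : 0 < c) (q0 q1 : R2)
    (hle : enorm2 q0 * enorm2 q1 ≤ 2 * c) :
    (q0 ≠ q1 →
      (∃! η : ℝ, 0 < η ∧ ff c q0 q1 η = 0) ∧ ∃! η : ℝ, η < 0 ∧ ff c q0 q1 η = 0) ∧
    (q0 = q1 → ff c q0 q1 0 = 0 ∧ ∀ η : ℝ, ff c q0 q1 η = 0 → η = 0) := by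
  constructor
  · intro hne
    refine ⟨pos_side c hc q0 q1 hle hne, ?_⟩
    have hle' : enorm2 q1 * enorm2 q0 ≤ 2 * c := by rwa [mul_comm] at hle
    obtain ⟨η₁, ⟨hη₁, hz₁⟩, hu₁⟩ := pos_side c hc q1 q0 hle' (Ne.symm hne)
    refine ⟨-η₁, ⟨by linarith, by rw [ff_neg]; exact hz₁⟩, ?_⟩
    rintro y ⟨hy, hyz⟩
    have hz : ff c q1 q0 (-y) = 0 := by
      rw [← ff_neg]
      simpa using hyz
    have := hu₁ (-y) ⟨by linarith, hz⟩
    linarith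
  · intro heq
    subst heq
    have hz0 : ff c q0 q0 0 = 0 := by
      rw [ff_eq]
      unfold G sq2
      simp
      ring
    refine ⟨hz0, ?_⟩
    have hSA := strictAntiG c (q0.1*q0.1 + q0.2*q0.2) (q0.1*q0.2 - q0.2*q0.1)
      ((sq2 q0 + sq2 q0)/2) hc (bnd_of_le c hc q0 q0 hle)
    have hpos : ∀ η : ℝ, 0 < η → ff c q0 q0 η ≠ 0 := by
      intro η hη
      have := hSA (self_mem_Ici : (0:ℝ) ∈ Ici (0:ℝ)) (mem_Ici.mpr (le_of_lt hη)) hη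
      rw [← ff_eq, ← ff_eq, hz0] at this
      linarith
    intro η hηz
    by_contra hne
    rcases lt_or_gt_of_ne hne with h | h
    · have : ff c q0 q0 (-η) = 0 := by rw [ff_neg]; exact hηz
      exact hpos (-η) (by linarith) this
    · exact hpos η h hηz
end

section
/- Fix q₀,q₁ ∈ ℝ² with q₀ ≠ q₁. The set of c ∈ (0,∞) such that every η ∈ ℝ with f_{c,q₀,q₁}(η) = 0 satisfies f'_{c,q₀,q₁}(η) ≠ 0 is residual (comeagre) in (0,∞). -/
open Set

open Filter Topology

private lemma aux_countable_of_isolated {S : Set ℝ}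
    (h : ∀ x ∈ S, ∀ᶠ y in 𝓝[≠] x, y ∉ S) : S.Countable := by
  have hd : DiscreteTopology S := by
    rw [discreteTopology_subtype_iff]
    intro x hx
    rw [inf_principal_eq_bot]
    exact h x hx
  have : Countable S := TopologicalSpace.separableSpace_iff_countable.mp inferInstance
  exact Set.countable_coe_iff.mp this

private lemma aux_countable_isMeagre {X : Type*} [TopologicalSpace X] [T1Space X]
    [∀ x : X, (𝓝[≠] x).NeBot] {s : Set X} (hs : s.Countable) : IsMeagre s := by
  rw [isMeagre_iff_countable_union_isNowhereDense]
  refine ⟨(fun x => ({x} : Set X)) '' s, ?_, hs.image _, fun x hx => ?_⟩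
  · rintro t ⟨x, -, rfl⟩
    rw [isClosed_singleton.isNowhereDense_iff]
    exact interior_eq_empty_iff_dense_compl.mpr (dense_compl_singleton x)
  · exact ⟨{x}, ⟨x, hx, rfl⟩, rfl⟩

private lemma aux_cos_an (x : ℝ) : AnalyticAt ℝ Real.cos x := by
  have h : Real.cos = fun y : ℝ => Complex.reCLM (Complex.cos (Complex.ofRealCLM y)) := by
    funext y
    simp [Complex.ofRealCLM_apply, Complex.reCLM_apply, Complex.cos_ofReal_re]
  rw [h]
  exact (Complex.reCLM.analyticAt _).comp
    ((Complex.differentiable_cos.analyticAt _).restrictScalars.comp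
      (Complex.ofRealCLM.analyticAt x))

private lemma aux_sin_an (x : ℝ) : AnalyticAt ℝ Real.sin x := by
  have h : Real.sin = fun y : ℝ => Complex.reCLM (Complex.sin (Complex.ofRealCLM y)) := by
    funext y
    simp [Complex.ofRealCLM_apply, Complex.reCLM_apply, Complex.sin_ofReal_re]
  rw [h]
  exact (Complex.reCLM.analyticAt _).comp
    ((Complex.differentiable_sin.analyticAt _).restrictScalars.comp
      (Complex.ofRealCLM.analyticAt x))

private lemma aux_ff_analytic (c : ℝ) (q0 q1 : R2) (x : ℝ) : AnalyticAt ℝ (ff c q0 q1) x := by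
  have hrw : ff c q0 q1 = fun η : ℝ =>
      -c * η ^ 2 + η * ((q1.1 * q0.1 + q1.2 * q0.2) * Real.cos (η + Real.pi / 2)
        + (q1.1 * q0.2 - q1.2 * q0.1) * Real.sin (η + Real.pi / 2))
      + (sq2 q0 + sq2 q1) / 2
      - ((q1.1 * q0.1 + q1.2 * q0.2) * Real.cos η
        + (q1.1 * q0.2 - q1.2 * q0.1) * Real.sin η) := by
    funext η
    simp only [ff, inner2, rot]
    ring
  rw [hrw]
  have hadd : AnalyticAt ℝ (fun η : ℝ => η + Real.pi / 2) x :=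
    analyticAt_id.add analyticAt_const
  have hA : AnalyticAt ℝ (fun η : ℝ => -c * η ^ 2) x := analyticAt_const.mul (analyticAt_id.pow 2)
  have hB : AnalyticAt ℝ (fun η : ℝ => η * ((q1.1 * q0.1 + q1.2 * q0.2) * Real.cos (η + Real.pi / 2)
      + (q1.1 * q0.2 - q1.2 * q0.1) * Real.sin (η + Real.pi / 2))) x :=
    analyticAt_id.mul ((analyticAt_const.mul ((aux_cos_an _).comp hadd)).add
      (analyticAt_const.mul ((aux_sin_an _).comp hadd)))
  have hD : AnalyticAt ℝ (fun η : ℝ => (q1.1 * q0.1 + q1.2 * q0.2) * Real.cos η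
      + (q1.1 * q0.2 - q1.2 * q0.1) * Real.sin η) x :=
    (analyticAt_const.mul (aux_cos_an _)).add (analyticAt_const.mul (aux_sin_an _))
  exact ((hA.add hB).add analyticAt_const).sub hD

private lemma aux_img_countable {g : ℝ → ℝ} {U : Set ℝ} (hUconv : Convex ℝ U)
    (hga : AnalyticOnNhd ℝ g U) :
    (g '' {x ∈ U | deriv g x = 0}).Countable := by
  have hd : AnalyticOnNhd ℝ (deriv g) U := hga.deriv
  by_cases hc : ∀ x ∈ U, deriv g x = 0
  · rcases Set.eq_empty_or_nonempty U with h | ⟨x₀, hx₀⟩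
    · subst h
      simp
    · apply Set.Countable.mono _ (Set.countable_singleton (g x₀))
      rintro y ⟨x, ⟨hxU, -⟩, rfl⟩
      have hb := Convex.norm_image_sub_le_of_norm_deriv_le (f := g) (C := 0)
        (fun z hz => (hga z hz).differentiableAt)
        (fun z hz => by simp [hc z hz]) hUconv hx₀ hxU
      have h1 : ‖g x - g x₀‖ ≤ 0 := by simpa using hb
      have h2 : g x - g x₀ = 0 := norm_le_zero_iff.mp h1
      simp only [Set.mem_singleton_iff]
      linarith
  · push_neg at hc
    obtain ⟨x₀, hx₀U, hx₀⟩ := hc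
    apply Set.Countable.image
    apply aux_countable_of_isolated
    intro x hx
    rcases (hd x hx.1).eventually_eq_zero_or_eventually_ne_zero with h | h
    · exfalso
      apply hx₀
      exact hd.eqOn_zero_of_preconnected_of_frequently_eq_zero hUconv.isPreconnected hx.1
        ((h.filter_mono nhdsWithin_le_nhds).frequently) hx₀U
    · filter_upwards [h] with y hy hyS
      exact hy hyS.2

/-- For fixed `q₀ ≠ q₁`, the set of `c ∈ (0,∞)` such that every zero of `f_{c,q₀,q₁}` is a
regular zero is residual in `(0,∞)`. -/
theorem stmt12 (q0 q1 : R2) (hq : q0 ≠ q1) :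
    {c : Ioi (0:ℝ) | ∀ η : ℝ, ff (c : ℝ) q0 q1 η = 0 → deriv (ff (c : ℝ) q0 q1) η ≠ 0} ∈
      residual (Ioi (0:ℝ)) := by
  classical
  set g : ℝ → ℝ := fun x => ff 0 q0 q1 x / x ^ 2 with hgdef
  have hffφ : ∀ c x : ℝ, ff c q0 q1 x = ff 0 q0 q1 x - c * x ^ 2 := by
    intro c x
    simp only [ff]
    ring
  have hgx : ∀ x : ℝ, x ≠ 0 → g x * x ^ 2 = ff 0 q0 q1 x := by
    intro x hx
    simp only [hgdef]
    field_simp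
  have hga : AnalyticOnNhd ℝ g {x : ℝ | x ≠ 0} := fun x hx =>
    (aux_ff_analytic 0 q0 q1 x).div (analyticAt_id.pow 2) (pow_ne_zero 2 hx)
  -- `η = 0` is never a zero of `ff c`
  have h00 : ∀ c : ℝ, ff c q0 q1 0 ≠ 0 := by
    intro c
    have hne : q0.1 ≠ q1.1 ∨ q0.2 ≠ q1.2 := by
      by_contra h
      push_neg at h
      exact hq (Prod.ext h.1 h.2)
    have hval : ff c q0 q1 0 = ((q0.1 - q1.1) ^ 2 + (q0.2 - q1.2) ^ 2) / 2 := by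
      simp [ff, rot, inner2, sq2]
      ring
    rw [hval]
    rcases hne with h | h
    · have h1 : (0:ℝ) < (q0.1 - q1.1) ^ 2 :=
        (sq_nonneg _).lt_of_ne (Ne.symm (pow_ne_zero 2 (sub_ne_zero.mpr h)))
      have h2 := sq_nonneg (q0.2 - q1.2)
      positivity
    · have h1 : (0:ℝ) < (q0.2 - q1.2) ^ 2 :=
        (sq_nonneg _).lt_of_ne (Ne.symm (pow_ne_zero 2 (sub_ne_zero.mpr h)))
      have h2 := sq_nonneg (q0.1 - q1.1)
      positivity
  -- any degenerate zero yields a critical value of `g`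
  set Z : Set ℝ := {x : ℝ | x ≠ 0 ∧ deriv g x = 0} with hZdef
  have key : ∀ c η : ℝ, ff c q0 q1 η = 0 → deriv (ff c q0 q1) η = 0 → c ∈ g '' Z := by
    intro c η h0 h1
    have hη : η ≠ 0 := by
      intro h
      exact h00 c (h ▸ h0)
    have h2 : ff 0 q0 q1 η - c * η ^ 2 = 0 := by
      rw [← hffφ]
      exact h0
    have hgη : g η = c := by
      simp only [hgdef]
      rw [div_eq_iff (pow_ne_zero 2 hη)]
      linarith
    have hdg : HasDerivAt g (deriv g η) η := ((hga η hη).differentiableAt).hasDerivAt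
    have heq : ff c q0 q1 =ᶠ[𝓝 η] fun x => g x * x ^ 2 - c * x ^ 2 := by
      filter_upwards [eventually_ne_nhds hη] with x hx
      rw [hffφ c x, ← hgx x hx]
    have hp : HasDerivAt (fun x : ℝ => x ^ 2) (2 * η) η := by
      simpa using hasDerivAt_pow 2 η
    have hder : HasDerivAt (fun x => g x * x ^ 2 - c * x ^ 2)
        (deriv g η * η ^ 2 + g η * (2 * η) - c * (2 * η)) η :=
      (hdg.mul hp).sub (hp.const_mul c)
    have hDval : deriv (ff c q0 q1) η = deriv g η * η ^ 2 + g η * (2 * η) - c * (2 * η) := by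
      rw [heq.deriv_eq]
      exact hder.deriv
    have h3 : deriv g η * η ^ 2 + g η * (2 * η) - c * (2 * η) = 0 := by
      rw [← hDval]
      exact h1
    rw [hgη] at h3
    have h4 : deriv g η * η ^ 2 = 0 := by linarith
    rcases mul_eq_zero.mp h4 with h | h
    · exact ⟨η, ⟨hη, h⟩, hgη⟩
    · exact absurd h (pow_ne_zero 2 hη)
  -- the set of critical values of `g` is countable
  have hBc : (g '' Z).Countable := by
    have h1 := aux_img_countable (convex_Ioi (0:ℝ)) (fun x hx => hga x (ne_of_gt hx))
    have h2 := aux_img_countable (convex_Iio (0:ℝ)) (fun x hx => hga x (ne_of_lt hx))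
    apply Set.Countable.mono _ (h1.union h2)
    rintro y ⟨x, ⟨hx0, hxd⟩, rfl⟩
    rcases Ne.lt_or_gt hx0 with h | h
    · exact Or.inr ⟨x, ⟨h, hxd⟩, rfl⟩
    · exact Or.inl ⟨x, ⟨h, hxd⟩, rfl⟩
  -- conclude by meagreness of countable sets
  haveI hNB : ∀ x : Ioi (0:ℝ), (𝓝[≠] x).NeBot := by
    intro x
    rw [nhds_ne_subtype_neBot_iff]
    refine Filter.NeBot.mono (inferInstance : (𝓝[>] (x:ℝ)).NeBot) ?_
    rw [← nhdsWithin_inter']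
    apply nhdsWithin_mono
    intro y hy
    exact ⟨ne_of_gt hy, lt_trans (show (0:ℝ) < (x:ℝ) from x.2) hy⟩
  have hmeagre : IsMeagre (Subtype.val ⁻¹' (g '' Z) : Set (Ioi (0:ℝ))) :=
    aux_countable_isMeagre (hBc.preimage Subtype.val_injective)
  refine Filter.mem_of_superset hmeagre ?_
  intro c hc η h0 h1
  exact hc (key (↑c) η h0 h1)
end

section
/- Fix c > 0 and q₀,q₁ ∈ ℝ² with q₀ ≠ q₁, and let f = f_{c,q₀,q₁}. Assume that f'(η) ≠ 0 for every η ∈ ℝ with f(η) = 0. Then both sets {η > 0 : f(η) = 0} and {η < 0 : f(η) = 0} are finite and have odd cardinality. -/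
open Set

open Filter Topology

/-! ### Auxiliary lemmas -/

lemma aux_isolated_zero {f : ℝ → ℝ} {z d : ℝ} (hd : HasDerivAt f d z) (hdz : d ≠ 0)
    (hz : f z = 0) : ∀ᶠ x in 𝓝[≠] z, f x ≠ 0 := by
  have h := hasDerivAt_iff_tendsto_slope.mp hd
  have h2 : ∀ᶠ x in 𝓝[≠] z, slope f z x ≠ 0 := h.eventually_ne hdz
  filter_upwards [h2, self_mem_nhdsWithin] with x hx hxz hfx
  exact hx (by simp [slope_def_field, hfx, hz])

lemma aux_finite_zeros {f : ℝ → ℝ} (hf : Continuous f) (hdf : Differentiable ℝ f)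
    (hreg : ∀ x, f x = 0 → deriv f x ≠ 0) (a b : ℝ) :
    (Icc a b ∩ f ⁻¹' {0}).Finite := by
  set S := Icc a b ∩ f ⁻¹' {0} with hS
  have hcomp : IsCompact S := isCompact_Icc.inter_right (isClosed_singleton.preimage hf)
  have : DiscreteTopology S := by
    rw [discreteTopology_subtype_iff]
    intro x hx
    have hiso := aux_isolated_zero (hdf x).hasDerivAt (hreg x hx.2) hx.2
    rw [← Filter.empty_mem_iff_bot, mem_inf_principal]
    filter_upwards [hiso] with y hy hyS
    exact absurd hyS.2 hy
  exact hcomp.finite (isDiscrete_iff_discreteTopology.mpr this)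

lemma aux_odd_add_two {m : ℕ} (h : Odd m) : Odd (m + 2) := by
  obtain ⟨k, hk⟩ := h; exact ⟨k + 1, by omega⟩

lemma aux_parity {f : ℝ → ℝ} (hf : Continuous f) (hdf : Differentiable ℝ f)
    (hreg : ∀ x, f x = 0 → deriv f x ≠ 0) :
    ∀ n : ℕ, ∀ a b : ℝ, a < b → 0 < f a → f b < 0 →
      {x ∈ Ioo a b | f x = 0}.Finite → {x ∈ Ioo a b | f x = 0}.ncard = n → Odd n := by
  intro n
  induction n using Nat.strong_induction_on with
  | _ n ih =>
  intro a b hab ha hb hfin hn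
  set Z := {x ∈ Ioo a b | f x = 0} with hZdef
  have hne : Z.Nonempty := by
    obtain ⟨x, hx, hfx⟩ := intermediate_value_Ioo' hab.le hf.continuousOn ⟨hb, ha⟩
    exact ⟨x, hx, hfx⟩
  obtain ⟨z, hzZ, hzmin⟩ := Set.exists_min_image Z id hfin hne
  obtain ⟨hz, hfz⟩ := hzZ
  -- f is positive on (a, z)
  have hpos : ∀ x ∈ Ioo a z, 0 < f x := by
    intro x hx
    by_contra hle
    push_neg at hle
    have hxb : x ∈ Ioo a b := ⟨hx.1, hx.2.trans hz.2⟩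
    have hxne : f x ≠ 0 := fun h0 => absurd (hzmin x ⟨hxb, h0⟩) (not_le.mpr hx.2)
    have hxneg : f x < 0 := lt_of_le_of_ne hle hxne
    obtain ⟨y, hy, hfy⟩ := intermediate_value_Ioo' hx.1.le
      (hf.continuousOn (s := Icc a x)) (⟨hxneg, ha⟩ : (0:ℝ) ∈ Ioo (f x) (f a))
    have hyZ : y ∈ Z := ⟨⟨hy.1, (hy.2.trans hx.2).trans hz.2⟩, hfy⟩
    exact absurd (hzmin y hyZ) (not_le.mpr (hy.2.trans hx.2))
  have hd : HasDerivAt f (deriv f z) z := (hdf z).hasDerivAt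
  have hslope := hasDerivAt_iff_tendsto_slope.mp hd
  have hslopeL : Tendsto (slope f z) (𝓝[<] z) (𝓝 (deriv f z)) :=
    hslope.mono_left (nhdsWithin_mono z (fun x hx => ne_of_lt hx))
  have hslopeR : Tendsto (slope f z) (𝓝[>] z) (𝓝 (deriv f z)) :=
    hslope.mono_left (nhdsWithin_mono z (fun x hx => ne_of_gt hx))
  have hdneg : deriv f z < 0 := by
    have hle : deriv f z ≤ 0 := by
      refine le_of_tendsto hslopeL ?_
      filter_upwards [Ioo_mem_nhdsLT_of_mem (⟨hz.1, le_refl z⟩ : z ∈ Ioc a z)] with x hx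
      rw [slope_def_field, hfz]
      have : f x / (x - z) < 0 := div_neg_of_pos_of_neg (hpos x hx) (by linarith [hx.2])
      simpa using this.le
    exact lt_of_le_of_ne hle (hreg z hfz)
  -- eventually f < 0 to the right of z
  have hevR : ∀ᶠ x in 𝓝[>] z, f x < 0 := by
    have h1 : ∀ᶠ x in 𝓝[>] z, slope f z x < 0 := hslopeR.eventually_lt_const hdneg
    filter_upwards [h1, self_mem_nhdsWithin] with x hx (hxz : z < x)
    have : slope f z x * (x - z) < 0 := mul_neg_of_neg_of_pos hx (by linarith)
    rw [slope_def_field, hfz, sub_zero, div_mul_cancel₀ _ (by linarith : x - z ≠ 0)] at this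
    exact this
  set Z₂ := {x ∈ Ioo z b | f x = 0} with hZ₂def
  have hZ₂sub : Z₂ ⊆ Z := fun x hx => ⟨⟨hz.1.trans hx.1.1, hx.1.2⟩, hx.2⟩
  have hZ₂fin : Z₂.Finite := hfin.subset hZ₂sub
  have hzZ₂ : z ∉ Z₂ := fun h => lt_irrefl z h.1.1
  have hZeq : Z = insert z Z₂ := by
    ext x
    constructor
    · rintro ⟨hx, hfx⟩
      rcases eq_or_lt_of_le (hzmin x ⟨hx, hfx⟩) with h | h
      · exact Or.inl h.symm
      · exact Or.inr ⟨⟨h, hx.2⟩, hfx⟩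
    · rintro (rfl | hx)
      · exact ⟨hz, hfz⟩
      · exact hZ₂sub hx
  rcases Z₂.eq_empty_or_nonempty with hZ₂e | hZ₂ne
  · -- exactly one zero
    have : Z = {z} := by rw [hZeq, hZ₂e, insert_empty_eq]
    rw [this, Set.ncard_singleton] at hn
    exact hn ▸ ⟨0, rfl⟩
  · obtain ⟨z', hz'Z₂, hz'min⟩ := Set.exists_min_image Z₂ id hZ₂fin hZ₂ne
    obtain ⟨hz', hfz'⟩ := hz'Z₂
    -- pick w in (z, z') with f w < 0
    obtain ⟨w, hwneg, hw⟩ := (hevR.and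
      (Ioo_mem_nhdsGT_of_mem (⟨le_refl z, hz'.1⟩ : z ∈ Ico z z'))).exists
    -- f negative on (w, z')
    have hneg : ∀ x ∈ Ioo w z', f x < 0 := by
      intro x hx
      by_contra hle
      push_neg at hle
      have hxz : z < x := hw.1.trans hx.1
      have hxb : x ∈ Ioo z b := ⟨hxz, hx.2.trans hz'.2⟩
      have hxne : f x ≠ 0 := fun h0 => absurd (hz'min x ⟨hxb, h0⟩) (not_le.mpr hx.2)
      have hxpos : 0 < f x := lt_of_le_of_ne hle (Ne.symm hxne)
      obtain ⟨y, hy, hfy⟩ := intermediate_value_Ioo hx.1.le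
        (hf.continuousOn (s := Icc w x)) (⟨hwneg, hxpos⟩ : (0:ℝ) ∈ Ioo (f w) (f x))
      have hyZ₂ : y ∈ Z₂ := ⟨⟨hw.1.trans hy.1, (hy.2.trans hx.2).trans hz'.2⟩, hfy⟩
      exact absurd (hz'min y hyZ₂) (not_le.mpr (hy.2.trans hx.2))
    have hd' : HasDerivAt f (deriv f z') z' := (hdf z').hasDerivAt
    have hslope' := hasDerivAt_iff_tendsto_slope.mp hd'
    have hdpos : 0 < deriv f z' := by
      have hge : 0 ≤ deriv f z' := by
        have hsl : Filter.Tendsto (slope f z') (𝓝[<] z') (𝓝 (deriv f z')) :=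
          hslope'.mono_left (nhdsWithin_mono z' (fun x hx => ne_of_lt hx))
        refine ge_of_tendsto hsl ?_
        filter_upwards [Ioo_mem_nhdsLT_of_mem (⟨hw.2, le_refl z'⟩ : z' ∈ Ioc w z')] with x hx
        rw [slope_def_field, hfz']
        have : 0 < f x / (x - z') := div_pos_of_neg_of_neg (hneg x hx) (by linarith [hx.2])
        simpa using this.le
      exact lt_of_le_of_ne hge (Ne.symm (hreg z' hfz'))
    -- eventually f > 0 to the right of z'
    have hevR' : ∀ᶠ x in 𝓝[>] z', 0 < f x := by
      have h1 : ∀ᶠ x in 𝓝[>] z', 0 < slope f z' x :=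
        (hslope'.mono_left (nhdsWithin_mono z' (fun x hx => ne_of_gt hx))).eventually_const_lt hdpos
      filter_upwards [h1, self_mem_nhdsWithin] with x hx (hxz : z' < x)
      have : 0 < slope f z' x * (x - z') := mul_pos hx (by linarith)
      rwa [slope_def_field, hfz', sub_zero, div_mul_cancel₀ _ (by linarith : x - z' ≠ 0)] at this
    have hE : {x | 0 < f x} ∩ Ioo z' b ∈ 𝓝[>] z' :=
      inter_mem hevR' (Ioo_mem_nhdsGT_of_mem ⟨le_refl z', hz'.2⟩)
    obtain ⟨u, hu, huE⟩ := mem_nhdsGT_iff_exists_Ioo_subset.mp hE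
    set a' := (z' + min u b) / 2 with ha'def
    have hz'u : z' < u := hu
    have hz'a' : z' < a' := by
      have : z' < min u b := lt_min hz'u hz'.2
      simp only [ha'def]; linarith
    have ha'u : a' < u := by
      have h1 : z' < min u b := lt_min hz'u hz'.2
      have h2 : min u b ≤ u := min_le_left _ _
      simp only [ha'def]; linarith
    have ha'b : a' < b := by
      have h1 : z' < min u b := lt_min hz'u hz'.2
      have h2 : min u b ≤ b := min_le_right _ _
      simp only [ha'def]; linarith
    have hfa' : 0 < f a' := (huE ⟨hz'a', ha'u⟩).1
    set Z₃ := {x ∈ Ioo a' b | f x = 0} with hZ₃def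
    have hZ₃eq : Z₃ = Z₂ \ {z'} := by
      ext x
      constructor
      · rintro ⟨hx, hfx⟩
        have hxz' : z' < x := hz'a'.trans hx.1
        exact ⟨⟨⟨hz'.1.trans hxz', hx.2⟩, hfx⟩, ne_of_gt hxz'⟩
      · rintro ⟨⟨hx, hfx⟩, hxne⟩
        have hxz' : z' < x := lt_of_le_of_ne (hz'min x ⟨hx, hfx⟩) (Ne.symm hxne)
        have hux : u ≤ x := by
          by_contra hlt
          push_neg at hlt
          exact absurd hfx (ne_of_gt (huE ⟨hxz', hlt⟩).1)
        exact ⟨⟨ha'u.trans_le hux, hx.2⟩, hfx⟩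
    have hZ₃fin : Z₃.Finite := hZ₂fin.subset (hZ₃eq ▸ diff_subset)
    have hz'Z₃ : z' ∉ Z₃ := by rw [hZ₃eq]; exact fun h => h.2 rfl
    have hZ₂eq : Z₂ = insert z' Z₃ := by
      rw [hZ₃eq, insert_diff_singleton,
        insert_eq_of_mem (show z' ∈ Z₂ from ⟨hz', hfz'⟩)]
    have hcard : n = Z₃.ncard + 2 := by
      rw [← hn, hZeq, hZ₂eq,
        Set.ncard_insert_of_notMem (by rw [hZ₂eq] at hzZ₂; exact hzZ₂)
          (hZ₃fin.insert z'),
        Set.ncard_insert_of_notMem hz'Z₃ hZ₃fin]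
    have hodd : Odd Z₃.ncard :=
      ih Z₃.ncard (by omega) a' b ha'b hfa' hb hZ₃fin rfl
    rw [hcard]
    exact aux_odd_add_two hodd

lemma aux_key {f : ℝ → ℝ} (hf : Continuous f) (hdf : Differentiable ℝ f)
    (hreg : ∀ x, f x = 0 → deriv f x ≠ 0) {b : ℝ} (hb0 : 0 < b) (h0 : 0 < f 0)
    (hbneg : ∀ x, b ≤ x → f x < 0) :
    {x : ℝ | 0 < x ∧ f x = 0}.Finite ∧ Odd {x : ℝ | 0 < x ∧ f x = 0}.ncard := by
  have hset : {x : ℝ | 0 < x ∧ f x = 0} = {x ∈ Ioo 0 b | f x = 0} := by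
    ext x
    constructor
    · rintro ⟨hx, hfx⟩
      refine ⟨⟨hx, ?_⟩, hfx⟩
      by_contra h
      push_neg at h
      exact absurd hfx (ne_of_lt (hbneg x h))
    · rintro ⟨hx, hfx⟩
      exact ⟨hx.1, hfx⟩
  have hfin : {x ∈ Ioo 0 b | f x = 0}.Finite :=
    (aux_finite_zeros hf hdf hreg 0 b).subset (fun x hx => ⟨⟨hx.1.1.le, hx.1.2.le⟩, hx.2⟩)
  rw [hset]
  exact ⟨hfin, aux_parity hf hdf hreg _ 0 b hb0 h0 (hbneg b le_rfl) hfin rfl⟩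

lemma aux_ff_diff (c : ℝ) (q0 q1 : R2) : Differentiable ℝ (ff c q0 q1) := by
  unfold ff inner2 rot sq2
  fun_prop

lemma aux_inner_rot_bound (q0 q1 : R2) (s : ℝ) :
    |inner2 q1 (rot s q0)| ≤ (|q1.1| + |q1.2|) * (|q0.1| + |q0.2|) := by
  unfold inner2 rot
  have h1 : |Real.cos s * q0.1 + Real.sin s * q0.2| ≤ |q0.1| + |q0.2| := by
    refine (abs_add_le _ _).trans (add_le_add ?_ ?_) <;> rw [abs_mul]
    · exact mul_le_of_le_one_left (abs_nonneg _) (Real.abs_cos_le_one s)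
    · exact mul_le_of_le_one_left (abs_nonneg _) (Real.abs_sin_le_one s)
  have h2 : |-Real.sin s * q0.1 + Real.cos s * q0.2| ≤ |q0.1| + |q0.2| := by
    refine (abs_add_le _ _).trans (add_le_add ?_ ?_) <;> rw [abs_mul]
    · exact mul_le_of_le_one_left (abs_nonneg _) (by rw [abs_neg]; exact Real.abs_sin_le_one s)
    · exact mul_le_of_le_one_left (abs_nonneg _) (Real.abs_cos_le_one s)
  calc |q1.1 * (Real.cos s * q0.1 + Real.sin s * q0.2) +
        q1.2 * (-Real.sin s * q0.1 + Real.cos s * q0.2)|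
      ≤ |q1.1| * |Real.cos s * q0.1 + Real.sin s * q0.2| +
        |q1.2| * |-Real.sin s * q0.1 + Real.cos s * q0.2| := by
        refine (abs_add_le _ _).trans ?_
        rw [abs_mul, abs_mul]
    _ ≤ |q1.1| * (|q0.1| + |q0.2|) + |q1.2| * (|q0.1| + |q0.2|) :=
        add_le_add (mul_le_mul_of_nonneg_left h1 (abs_nonneg _))
          (mul_le_mul_of_nonneg_left h2 (abs_nonneg _))
    _ = (|q1.1| + |q1.2|) * (|q0.1| + |q0.2|) := by ring

lemma aux_ff_neg_of_large {c : ℝ} (hc : 0 < c) (q0 q1 : R2) :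
    ∃ M : ℝ, 0 < M ∧ ∀ η : ℝ, M ≤ |η| → ff c q0 q1 η < 0 := by
  set B := (|q1.1| + |q1.2|) * (|q0.1| + |q0.2|) with hBdef
  have hB : 0 ≤ B := mul_nonneg (by positivity) (by positivity)
  set C := (sq2 q0 + sq2 q1) / 2 + B with hCdef
  have hC : 0 ≤ C := by
    rw [hCdef]
    have : 0 ≤ (sq2 q0 + sq2 q1) / 2 := by unfold sq2; positivity
    linarith
  refine ⟨max 1 ((B + C + 1) / c), lt_of_lt_of_le one_pos (le_max_left _ _), ?_⟩
  intro η hη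
  have h1 : 1 ≤ |η| := le_trans (le_max_left _ _) hη
  have h2 : (B + C + 1) / c ≤ |η| := le_trans (le_max_right _ _) hη
  have h3 : B + C + 1 ≤ c * |η| := by
    rw [div_le_iff₀ hc] at h2; linarith [h2]
  have hb1 := aux_inner_rot_bound q0 q1 (η + Real.pi / 2)
  have hb2 := aux_inner_rot_bound q0 q1 η
  have hup : ff c q0 q1 η ≤ -c * η ^ 2 + |η| * B + C := by
    unfold ff
    have e1 : η * inner2 q1 (rot (η + Real.pi / 2) q0) ≤ |η| * B :=
      calc η * inner2 q1 (rot (η + Real.pi / 2) q0)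
          ≤ |η * inner2 q1 (rot (η + Real.pi / 2) q0)| := le_abs_self _
        _ = |η| * |inner2 q1 (rot (η + Real.pi / 2) q0)| := abs_mul _ _
        _ ≤ |η| * B := mul_le_mul_of_nonneg_left hb1 (abs_nonneg η)
    have e2 : -inner2 q1 (rot η q0) ≤ B := by
      have := (abs_le.mp hb2).1; linarith
    rw [hCdef]
    linarith
  have hsq : |η| ^ 2 = η ^ 2 := sq_abs η
  have h4 : (B + C + 1) * |η| ≤ (c * |η|) * |η| :=
    mul_le_mul_of_nonneg_right h3 (abs_nonneg η)
  nlinarith [hup, h1, hC, hB]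

lemma aux_ff_zero_pos (c : ℝ) {q0 q1 : R2} (hq : q0 ≠ q1) : 0 < ff c q0 q1 0 := by
  have heq : ff c q0 q1 0 = ((q0.1 - q1.1) ^ 2 + (q0.2 - q1.2) ^ 2) / 2 := by
    unfold ff inner2 rot sq2
    simp [Real.cos_zero, Real.sin_zero]
    ring
  rw [heq]
  have h : q0.1 ≠ q1.1 ∨ q0.2 ≠ q1.2 := by
    by_contra h; push_neg at h; exact hq (Prod.ext h.1 h.2)
  rcases h with h | h
  · have := mul_self_pos.mpr (sub_ne_zero.mpr h)
    nlinarith [sq_nonneg (q0.2 - q1.2)]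
  · have := mul_self_pos.mpr (sub_ne_zero.mpr h)
    nlinarith [sq_nonneg (q0.1 - q1.1)]

/-- If `q₀ ≠ q₁` and every zero of `f = f_{c,q₀,q₁}` is regular, then the sets of positive
and of negative zeroes of `f` are finite of odd cardinality. -/
theorem stmt13 (c : ℝ) (hc : 0 < c) (q0 q1 : R2) (hq : q0 ≠ q1)
    (hreg : ∀ η : ℝ, ff c q0 q1 η = 0 → deriv (ff c q0 q1) η ≠ 0) :
    ({η : ℝ | 0 < η ∧ ff c q0 q1 η = 0}.Finite ∧
        Odd {η : ℝ | 0 < η ∧ ff c q0 q1 η = 0}.ncard) ∧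
      {η : ℝ | η < 0 ∧ ff c q0 q1 η = 0}.Finite ∧
        Odd {η : ℝ | η < 0 ∧ ff c q0 q1 η = 0}.ncard := by
  have hdf : Differentiable ℝ (ff c q0 q1) := aux_ff_diff c q0 q1
  have hf : Continuous (ff c q0 q1) := hdf.continuous
  obtain ⟨M, hM0, hMneg⟩ := aux_ff_neg_of_large hc q0 q1
  have h0 : 0 < ff c q0 q1 0 := aux_ff_zero_pos c hq
  constructor
  · exact aux_key hf hdf hreg hM0 h0
      (fun x hx => hMneg x (by rw [abs_of_nonneg (hM0.le.trans hx)]; exact hx))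
  · -- negative side: compose with negation
    set g : ℝ → ℝ := fun η => ff c q0 q1 (-η) with hgdef
    have hgd : Differentiable ℝ g := hdf.comp differentiable_neg
    have hgc : Continuous g := hgd.continuous
    have hgreg : ∀ x, g x = 0 → deriv g x ≠ 0 := by
      intro x hx
      have : deriv g x = -deriv (ff c q0 q1) (-x) := deriv_comp_neg (ff c q0 q1) x
      rw [this]
      simpa using hreg (-x) hx
    have hg0 : 0 < g 0 := by simpa [hgdef] using h0
    have hgneg : ∀ x, M ≤ x → g x < 0 := by
      intro x hx
      exact hMneg (-x) (by rw [abs_neg, abs_of_nonneg (hM0.le.trans hx)]; exact hx)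
    have hkey := aux_key hgc hgd hgreg hM0 hg0 hgneg
    have himg : {η : ℝ | η < 0 ∧ ff c q0 q1 η = 0} =
        Neg.neg '' {x : ℝ | 0 < x ∧ g x = 0} := by
      ext η
      constructor
      · rintro ⟨hη, hfη⟩
        exact ⟨-η, ⟨by linarith, by simpa [hgdef] using hfη⟩, by ring⟩
      · rintro ⟨x, ⟨hx, hgx⟩, rfl⟩
        exact ⟨by linarith, by simpa [hgdef] using hgx⟩
    rw [himg]
    exact ⟨hkey.1.image _, by
      rw [Set.ncard_image_of_injective _ neg_injective]; exact hkey.2⟩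
end
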